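/- arXiv:2410.18865 — 2 statements merged into one kernel-verified Lean document; each statement's English description precedes it below -/
import Mathlib

section
/- Let x be an orthogonal transformation of V permuting Φ, 0 < θ ≤ π, and let e ∈ closure(C₀) be a Φ-regular point of V_x^θ. Then Φ(x) ⊆ Ψ := {γ ∈ Φ : V_x^θ ⊆ H_γ}. Moreover, for γ ∈ Φ⁺ \ Ψ, n_x(γ) equals the minimal integer i ≥ 1 such that (x^{-i}(e), γ) < 0. -/
/-- `V_x^θ = {v | x v + x⁻¹ v = 2 cos θ • v}`. -/
def Vtheta {V : Type*} [NormedAddCommGroup V] [InnerProductSpace ℝ V]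
    (x : V ≃ₗᵢ[ℝ] V) (θ : ℝ) : Set V :=
  {v | x v + x.symm v = (2 * Real.cos θ) • v}

/-- minimal `i ≥ 1` with `(x^i) γ ∈ Φneg` (or `0` if none exists). -/
noncomputable def nx {V : Type*} [NormedAddCommGroup V] [InnerProductSpace ℝ V]
    (x : V ≃ₗᵢ[ℝ] V) (Φneg : Set V) (γ : V) : ℕ :=
  sInf {i : ℕ | 1 ≤ i ∧ (x ^ i) γ ∈ Φneg}

/-!
If the `x`-orbit of a root `γ` keeps its sign while `⟪e, γ⟫ ≠ 0`, then, since `x` has finite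
order `m`, the average `w = ∑_{i < m} x^{-i} e` is an `x`-fixed vector of `V_x^θ`, so `w = 0`
because `cos θ < 1`; yet `⟪w, ±γ⟫ = ∑_{i < m} ⟪e, x^i (±γ)⟫ > 0` by dominance of `e`.
For the formula for `n_x γ`: `V_x^θ` is `x`-stable, so `x^i γ` is not orthogonal to `V_x^θ`
when `γ` is not, and regularity of `e` gives `⟪e, x^i γ⟫ ≠ 0`; for a root `β` with
`⟪e, β⟫ ≠ 0`, dominance of `e` makes `β` negative exactly when `⟪e, β⟫ < 0`.
-/

open Finset

section Vtheta

variable {V : Type*} [NormedAddCommGroup V] [InnerProductSpace ℝ V] {x : V ≃ₗᵢ[ℝ] V} {θ : ℝ}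

lemma inner_symm_apply (g : V ≃ₗᵢ[ℝ] V) (v w : V) :
    (inner ℝ (g.symm v) w : ℝ) = inner ℝ v (g w) := by
  rw [LinearIsometryEquiv.inner_map_eq_flip, LinearIsometryEquiv.symm_symm]

lemma mapsTo_pow {g : V ≃ₗᵢ[ℝ] V} {s : Set V} (h : Set.MapsTo g s s) (i : ℕ) :
    Set.MapsTo (g ^ i) s s := by
  induction i with
  | zero => exact Set.mapsTo_id s
  | succ i ih =>
    rw [pow_succ', LinearIsometryEquiv.coe_mul]
    exact h.comp ih

lemma apply_mem_Vtheta_of_commute {g : V ≃ₗᵢ[ℝ] V} (hg : Commute g x) {v : V}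
    (hv : v ∈ Vtheta x θ) : g v ∈ Vtheta x θ := by
  have hgx : g (x v) = x (g v) := DFunLike.congr_fun hg v
  have hgx' : g (x.symm v) = x.symm (g v) := by
    simpa only [LinearIsometryEquiv.coe_mul, LinearIsometryEquiv.coe_inv, Function.comp_apply]
      using DFunLike.congr_fun hg.inv_right v
  change x (g v) + x.symm (g v) = (2 * Real.cos θ) • g v
  rw [← hgx, ← hgx', ← _root_.map_add, hv, _root_.map_smul]

lemma sum_mem_Vtheta {ι : Type*} (s : Finset ι) {f : ι → V} (hf : ∀ i ∈ s, f i ∈ Vtheta x θ) :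
    ∑ i ∈ s, f i ∈ Vtheta x θ := by
  simp only [Vtheta, Set.mem_ofPred_eq, map_sum, smul_sum, ← sum_add_distrib]
  exact sum_congr rfl hf

lemma eq_zero_of_mem_Vtheta_of_apply_eq_self (hθ₀ : 0 < θ) (hθπ : θ ≤ Real.pi) {w : V}
    (hw : w ∈ Vtheta x θ) (hfix : x w = w) : w = 0 := by
  have hfix' : x.symm w = w := x.symm_apply_eq.2 hfix.symm
  have hcos : Real.cos θ < 1 := by
    simpa using Real.cos_lt_cos_of_nonneg_of_le_pi le_rfl hθπ hθ₀
  have hw' : (2 - 2 * Real.cos θ) • w = 0 := by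
    have : w + w = (2 * Real.cos θ) • w := by rwa [Vtheta, Set.mem_ofPred_eq, hfix, hfix'] at hw
    rw [sub_smul, ← this, two_smul, sub_self]
  exact (smul_eq_zero.1 hw').resolve_left (by linarith)

lemma apply_sum_range_pow_apply {g : V ≃ₗᵢ[ℝ] V} {m : ℕ} (hg : g ^ m = 1) (v : V) :
    g (∑ i ∈ range m, (g ^ i) v) = ∑ i ∈ range m, (g ^ i) v := by
  have hshift := sum_range_succ' (fun i => (g ^ i) v) m
  rw [sum_range_succ, hg, ← pow_zero g] at hshift
  rw [map_sum, ← add_right_cancel hshift.symm]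
  exact sum_congr rfl fun i _ => by
    rw [pow_succ', LinearIsometryEquiv.coe_mul, Function.comp_apply]

lemma inner_eq_zero_of_forall_inner_pow_apply_nonneg (hord : ∃ m : ℕ, 1 ≤ m ∧ x ^ m = 1)
    (hθ₀ : 0 < θ) (hθπ : θ ≤ Real.pi) {e δ : V} (he : e ∈ Vtheta x θ)
    (h : ∀ i : ℕ, 0 ≤ (inner ℝ e ((x ^ i) δ) : ℝ)) : (inner ℝ e δ : ℝ) = 0 := by
  obtain ⟨m, hm, hxm⟩ := hord
  set w := ∑ i ∈ range m, (x⁻¹ ^ i) e with hw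
  have hw0 : w = 0 := by
    refine eq_zero_of_mem_Vtheta_of_apply_eq_self hθ₀ hθπ
      (sum_mem_Vtheta _ fun i _ => apply_mem_Vtheta_of_commute
        ((Commute.refl x).inv_left.pow_left i) he) ?_
    have hinv : x.symm w = w := by
      rw [← LinearIsometryEquiv.coe_inv]
      exact apply_sum_range_pow_apply (by rw [inv_pow, hxm, inv_one]) e
    exact (x.symm_apply_eq.1 hinv).symm
  have hpair : (inner ℝ w δ : ℝ) = ∑ i ∈ range m, (inner ℝ e ((x ^ i) δ) : ℝ) := by
    rw [hw, sum_inner]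
    exact sum_congr rfl fun i _ => by rw [inv_pow, LinearIsometryEquiv.coe_inv, inner_symm_apply]
  rw [hw0, inner_zero_left, eq_comm, sum_eq_zero_iff_of_nonneg fun i _ => h i] at hpair
  simpa using hpair 0 (mem_range.2 hm)

lemma forall_inner_eq_zero_of_forall_inner_pow_apply_eq_zero {γ : V} (i : ℕ)
    (h : ∀ v ∈ Vtheta x θ, (inner ℝ v ((x ^ i) γ) : ℝ) = 0) :
    ∀ v ∈ Vtheta x θ, (inner ℝ v γ : ℝ) = 0 := fun v hv => by
  rw [← h _ (apply_mem_Vtheta_of_commute (Commute.self_pow x i).symm hv),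
    LinearIsometryEquiv.inner_map_map]

end Vtheta

section Roots

variable {V : Type*} [NormedAddCommGroup V] [InnerProductSpace ℝ V] {Φpos : Set V} {e : V}

lemma inner_eq_zero_of_forall_pow_apply_mem_iff {x : V ≃ₗᵢ[ℝ] V} {θ : ℝ}
    (hord : ∃ m : ℕ, 1 ≤ m ∧ x ^ m = 1) (hθ₀ : 0 < θ) (hθπ : θ ≤ Real.pi)
    (he : e ∈ Vtheta x θ) (hdom : ∀ α ∈ Φpos, 0 ≤ (inner ℝ e α : ℝ)) {γ : V}
    (hroot : ∀ i : ℕ, (x ^ i) γ ∈ Φpos ∪ -Φpos)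
    (hsign : ∀ i : ℕ, ((x ^ i) γ ∈ Φpos ↔ γ ∈ Φpos)) :
    (inner ℝ e γ : ℝ) = 0 := by
  by_cases hγ : γ ∈ Φpos
  · exact inner_eq_zero_of_forall_inner_pow_apply_nonneg hord hθ₀ hθπ he
      fun i => hdom _ ((hsign i).2 hγ)
  · have hneg : ∀ i : ℕ, -(x ^ i) γ ∈ Φpos := fun i => (hroot i).resolve_left (mt (hsign i).1 hγ)
    have := inner_eq_zero_of_forall_inner_pow_apply_nonneg (δ := -γ) hord hθ₀ hθπ he
      fun i => by simpa only [map_neg] using hdom _ (hneg i)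
    rwa [inner_neg_right, neg_eq_zero] at this

lemma mem_neg_iff_inner_neg (hdom : ∀ α ∈ Φpos, 0 ≤ (inner ℝ e α : ℝ)) {β : V}
    (hβ : β ∈ Φpos ∪ -Φpos) (hne : (inner ℝ e β : ℝ) ≠ 0) :
    β ∈ -Φpos ↔ (inner ℝ e β : ℝ) < 0 := by
  refine ⟨fun hneg => lt_of_le_of_ne ?_ hne, fun hlt => hβ.resolve_left fun hpos => ?_⟩
  · simpa only [inner_neg_right, neg_nonneg] using hdom _ hneg
  · exact (hdom β hpos).not_gt hlt

end Roots

theorem rotation_nx_formula_general {V : Type*} [NormedAddCommGroup V]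
    [InnerProductSpace ℝ V]
    (Φpos : Set V) (x : V ≃ₗᵢ[ℝ] V) (θ : ℝ) (e : V)
    (hx : x '' (Φpos ∪ -Φpos) = Φpos ∪ -Φpos)
    (hord : ∃ m : ℕ, 1 ≤ m ∧ x ^ m = 1)
    (hθ : 0 < θ ∧ θ ≤ Real.pi)
    (he : e ∈ Vtheta x θ) (hdom : ∀ α ∈ Φpos, 0 ≤ (inner ℝ e α : ℝ))
    (hreg : ∀ γ ∈ Φpos ∪ -Φpos, (inner ℝ e γ : ℝ) = 0 →
      ∀ v ∈ Vtheta x θ, (inner ℝ v γ : ℝ) = 0) :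
    ({γ ∈ Φpos ∪ -Φpos | ∀ i : ℤ, ((x ^ i) γ ∈ Φpos ↔ γ ∈ Φpos)} ⊆
      {γ ∈ Φpos ∪ -Φpos | ∀ v ∈ Vtheta x θ, (inner ℝ v γ : ℝ) = 0}) ∧
    (∀ γ ∈ Φpos, ¬ (∀ v ∈ Vtheta x θ, (inner ℝ v γ : ℝ) = 0) →
      nx x (-Φpos) γ = sInf {i : ℕ | 1 ≤ i ∧ (inner ℝ ((x ^ i).symm e) γ : ℝ) < 0}) := by
  have hroot := mapsTo_pow (Set.mapsTo_iff_image_subset.2 hx.subset)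
  refine ⟨fun γ ⟨hγ, hsign⟩ => ⟨hγ, hreg γ hγ ?_⟩, fun γ hγ hnΨ => ?_⟩
  · exact inner_eq_zero_of_forall_pow_apply_mem_iff hord hθ.1 hθ.2 he hdom
      (fun i => hroot i hγ) fun i => by simpa only [zpow_natCast] using hsign i
  · unfold nx
    congr 1; ext i
    refine and_congr_right fun _ => ?_
    have hne : (inner ℝ e ((x ^ i) γ) : ℝ) ≠ 0 := fun h0 =>
      hnΨ (forall_inner_eq_zero_of_forall_inner_pow_apply_eq_zero i
        (hreg _ (hroot i (Or.inl hγ)) h0))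
    rw [inner_symm_apply]
    exact mem_neg_iff_inner_neg hdom (hroot i (Or.inl hγ)) hne

/-- with `e ∈ closure C₀` a `Φ`-regular point of `V_x^θ`
(`0 < θ ≤ π`), one has `Φ(x) ⊆ Ψ := {γ ∈ Φ | V_x^θ ⊆ H_γ}`, and for every
`γ ∈ Φ⁺ \ Ψ`, `n_x γ` equals the minimal `i ≥ 1` with `⟪x^{-i} e, γ⟫ < 0`. -/
theorem rotation_nx_formula {V : Type*} [NormedAddCommGroup V]
    [InnerProductSpace ℝ V] [FiniteDimensional ℝ V]
    (Φpos : Set V) (x : V ≃ₗᵢ[ℝ] V) (θ : ℝ) (e : V)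
    (hfin : (Φpos ∪ -Φpos).Finite)
    (hdisj : Disjoint Φpos (-Φpos))
    (hx : x '' (Φpos ∪ -Φpos) = Φpos ∪ -Φpos)
    (hord : ∃ m : ℕ, 1 ≤ m ∧ x ^ m = 1)
    (hθ : 0 < θ ∧ θ ≤ Real.pi)
    (he : e ∈ Vtheta x θ) (hdom : ∀ α ∈ Φpos, 0 ≤ (inner ℝ e α : ℝ))
    (hreg : ∀ γ ∈ Φpos ∪ -Φpos, (inner ℝ e γ : ℝ) = 0 →
      ∀ v ∈ Vtheta x θ, (inner ℝ v γ : ℝ) = 0) :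
    ({γ ∈ Φpos ∪ -Φpos | ∀ i : ℤ, ((x ^ i) γ ∈ Φpos ↔ γ ∈ Φpos)} ⊆
      {γ ∈ Φpos ∪ -Φpos | ∀ v ∈ Vtheta x θ, (inner ℝ v γ : ℝ) = 0}) ∧
    (∀ γ ∈ Φpos, ¬ (∀ v ∈ Vtheta x θ, (inner ℝ v γ : ℝ) = 0) →
      nx x (-Φpos) γ = sInf {i : ℕ | 1 ≤ i ∧ (inner ℝ ((x ^ i).symm e) γ : ℝ) < 0}) :=
  rotation_nx_formula_general Φpos x θ e hx hord hθ he hdom hreg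
end

section
/- With the hypotheses of the previous lemma (e ∈ closure(C₀) a Φ-regular point of V_x^θ, 0 < θ ≤ π, Ψ = {γ ∈ Φ : V_x^θ ⊆ H_γ}): for any α, β ∈ Φ⁺ \ Ψ with α + β ∈ Φ⁺, one has n_x(α+β) ≤ max{n_x(α), n_x(β)}. -/
open Real Set

namespace Complex

theorem re_mul_exp_ofReal_mul_I (w : ℂ) (t : ℝ) :
    (w * exp (t * I)).re = ‖w‖ * Real.cos (w.arg + t) := by
  conv_lhs => rw [← norm_mul_exp_arg_mul_I w]
  rw [mul_assoc, ← exp_add, ← add_mul, ← ofReal_add, re_ofReal_mul, exp_ofReal_mul_I_re]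

theorem abs_arg_lt_pi_div_two_of_re_pos {w : ℂ} (hw : 0 < w.re) : |w.arg| < π / 2 :=
  abs_arg_lt_pi_div_two_iff.mpr (Or.inl hw)

theorem pi_div_two_lt_arg_add_of_re_mul_exp_neg {w : ℂ} (hw : 0 < w.re) {t : ℝ} (ht : 0 ≤ t)
    (h : (w * exp (t * I)).re < 0) : π / 2 < w.arg + t := by
  have harg := abs_lt.mp (abs_arg_lt_pi_div_two_of_re_pos hw)
  by_contra! hle
  have := Real.cos_nonneg_of_neg_pi_div_two_le_of_le (x := w.arg + t) (by linarith) hle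
  rw [re_mul_exp_ofReal_mul_I] at h
  nlinarith [norm_nonneg w]

theorem re_mul_exp_neg_of_pi_div_two_lt_arg_add {w : ℂ} (hw : w ≠ 0) {t : ℝ}
    (h₁ : π / 2 < w.arg + t) (h₂ : w.arg + t < π + π / 2) : (w * exp (t * I)).re < 0 := by
  rw [re_mul_exp_ofReal_mul_I]
  exact mul_neg_of_pos_of_neg (norm_pos_iff.mpr hw) (Real.cos_neg_of_pi_div_two_lt_of_lt h₁ h₂)

/-- Rotating by `π / 2 - arg (w₁ + w₂)` would put `w₁ + w₂` on the imaginary axis but, if both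
`w₁` and `w₂` had a larger argument, would move them both into the open left half-plane. -/
theorem min_arg_le_arg_add {w₁ w₂ : ℂ} (h₁ : 0 < w₁.re) (h₂ : 0 < w₂.re) :
    min w₁.arg w₂.arg ≤ (w₁ + w₂).arg := by
  have hsum : 0 < (w₁ + w₂).re := by rw [add_re]; positivity
  have harg₁ := abs_lt.mp (abs_arg_lt_pi_div_two_of_re_pos h₁)
  have harg₂ := abs_lt.mp (abs_arg_lt_pi_div_two_of_re_pos h₂)
  have hargs := abs_lt.mp (abs_arg_lt_pi_div_two_of_re_pos hsum)
  by_contra! hlt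
  rw [lt_min_iff] at hlt
  set t := π / 2 - (w₁ + w₂).arg with ht
  have hneg₁ := re_mul_exp_neg_of_pi_div_two_lt_arg_add (w := w₁) (t := t)
    (by rintro rfl; simp at h₁) (by linarith [ht]) (by linarith [ht])
  have hneg₂ := re_mul_exp_neg_of_pi_div_two_lt_arg_add (w := w₂) (t := t)
    (by rintro rfl; simp at h₂) (by linarith [ht]) (by linarith [ht])
  have := pi_div_two_lt_arg_add_of_re_mul_exp_neg hsum (t := t) (by linarith [ht])
    (by rw [add_mul, add_re]; linarith)
  linarith [ht]

end Complex

theorem floor_div_add_one_mul_mem_Ioo {φ θ : ℝ} (hφ : 0 < φ) (hφπ : φ < π) (hθ : 0 < θ)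
    (hθπ : θ ≤ π) : ((⌊φ / θ⌋₊ + 1 : ℕ) : ℝ) * θ ∈ Ioo φ (φ + π) := by
  have hfloor : (⌊φ / θ⌋₊ : ℝ) * θ ≤ φ := (le_div_iff₀ hθ).mp (Nat.floor_le (by positivity))
  push_cast
  refine ⟨(div_lt_iff₀ hθ).mp (Nat.lt_floor_add_one _), ?_⟩
  rcases Nat.eq_zero_or_pos ⌊φ / θ⌋₊ with h0 | hpos
  · rw [h0]; push_cast; linarith
  · have : θ ≤ (⌊φ / θ⌋₊ : ℝ) * θ := le_mul_of_one_le_left hθ.le (by exact_mod_cast hpos)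
    linarith

theorem iterate_eq_rotation {M F : Type*} [AddCommGroup M] [Module ℝ M] [FunLike F M M]
    [LinearMapClass F ℝ M M] {f : F} {θ : ℝ} {u v : M}
    (hu : f u = Real.cos θ • u - Real.sin θ • v) (hv : f v = Real.sin θ • u + Real.cos θ • v)
    (n : ℕ) :
    f^[n] u = Real.cos (n * θ) • u - Real.sin (n * θ) • v ∧
      f^[n] v = Real.sin (n * θ) • u + Real.cos (n * θ) • v := by
  induction n with
  | zero => simp
  | succ n ih =>
    simp only [Function.iterate_succ_apply', ih.1, ih.2, map_add, map_sub, map_smul, hu, hv,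
      Nat.cast_succ, add_mul, one_mul, Real.cos_add, Real.sin_add]
    constructor <;> module

namespace LinearIsometryEquiv

variable {R E : Type*} [Semiring R] [SeminormedAddCommGroup E] [Module R E]

theorem coe_pow (x : E ≃ₗᵢ[R] E) (n : ℕ) : ⇑(x ^ n) = (⇑x)^[n] :=
  hom_coe_pow _ rfl (fun _ _ ↦ rfl) x n

theorem coe_pow_symm (x : E ≃ₗᵢ[R] E) (n : ℕ) : ⇑(x ^ n).symm = (⇑x.symm)^[n] := by
  rw [← inv_def, ← inv_pow, coe_pow, coe_inv]

end LinearIsometryEquiv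

section Rotation

variable {V : Type*} [NormedAddCommGroup V] [InnerProductSpace ℝ V] {x : V ≃ₗᵢ[ℝ] V} {θ : ℝ}
  {e : V}

theorem mapsTo_pow_Vtheta (n : ℕ) :
    MapsTo (x ^ n) (Vtheta x θ) (Vtheta x θ) := by
  have hmaps : MapsTo x (Vtheta x θ) (Vtheta x θ) := fun v (hv : _ = _) ↦ by
    show x (x v) + x.symm (x v) = _
    rw [x.symm_apply_apply, ← x.apply_symm_apply v, ← map_add, x.apply_symm_apply, hv, map_smul]
  rw [LinearIsometryEquiv.coe_pow]
  exact hmaps.iterate n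

theorem inner_map_self_of_mem_Vtheta (he : e ∈ Vtheta x θ) :
    inner ℝ (x e) e = Real.cos θ * ‖e‖ ^ 2 := by
  have h := congrArg (fun v ↦ inner ℝ v e) (show x e + x.symm e = _ from he)
  have hsymm : inner ℝ (x.symm e) e = inner ℝ (x e) e := by
    rw [x.symm.inner_map_eq_flip, real_inner_comm, LinearIsometryEquiv.symm_symm]
  simp only [inner_add_left, hsymm, real_inner_smul_left, real_inner_self_eq_norm_sq] at h
  linarith

theorem norm_map_sub_cos_smul_sq (he : e ∈ Vtheta x θ) :
    ‖x e - Real.cos θ • e‖ ^ 2 = (Real.sin θ * ‖e‖) ^ 2 := by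
  rw [norm_sub_sq_real, inner_smul_right, inner_map_self_of_mem_Vtheta he, norm_smul, x.norm_map,
    Real.norm_eq_abs, mul_pow, sq_abs, mul_pow, Real.sin_sq]
  ring

theorem exists_symm_apply_eq_rotation (he : e ∈ Vtheta x θ) :
    ∃ e' : V, x.symm e = Real.cos θ • e - Real.sin θ • e' ∧
      x.symm e' = Real.sin θ • e + Real.cos θ • e' := by
  have hsymm : x.symm e = (2 * Real.cos θ) • e - x e := eq_sub_of_add_eq' he
  rcases eq_or_ne (Real.sin θ) 0 with h0 | h0
  · refine ⟨0, ?_, by simp [h0]⟩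
    have hxe : x e = Real.cos θ • e := by
      simpa [h0, sub_eq_zero] using norm_map_sub_cos_smul_sq he
    rw [hsymm, hxe, h0]; module
  · refine ⟨(Real.sin θ)⁻¹ • (x e - Real.cos θ • e), ?_, ?_⟩
    · rw [hsymm, smul_smul, mul_inv_cancel₀ h0, one_smul]; module
    · rw [map_smul, map_sub, map_smul, x.symm_apply_apply, hsymm]
      match_scalars
      · field_simp
        linear_combination -Real.sin_sq_add_cos_sq θ
      · field_simp

theorem exists_inner_pow_apply_eq_re (he : e ∈ Vtheta x θ) :
    ∃ w : V →ₗ[ℝ] ℂ, ∀ (n : ℕ) (γ : V),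
      inner ℝ e ((x ^ n) γ) = (w γ * Complex.exp (↑(n * θ) * Complex.I)).re := by
  obtain ⟨e', hu, hv⟩ := exists_symm_apply_eq_rotation he
  refine ⟨(innerₛₗ ℝ e).smulRight 1 + (innerₛₗ ℝ e').smulRight Complex.I, fun n γ ↦ ?_⟩
  rw [real_inner_comm, LinearIsometryEquiv.inner_map_eq_flip, real_inner_comm,
    LinearIsometryEquiv.coe_pow_symm, (iterate_eq_rotation hu hv n).1, Complex.mul_re,
    Complex.exp_ofReal_mul_I_re, Complex.exp_ofReal_mul_I_im]
  simp [inner_sub_left, real_inner_smul_left]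
  ring

end Rotation

section RootSystem

variable {V : Type*} [NormedAddCommGroup V] [InnerProductSpace ℝ V] {Φpos : Set V}
  {x : V ≃ₗᵢ[ℝ] V} {θ : ℝ} {e : V}

theorem inner_pos_of_not_forall_inner_Vtheta_eq_zero (hdom : ∀ α ∈ Φpos, 0 ≤ inner ℝ e α)
    (hreg : ∀ γ ∈ Φpos ∪ -Φpos, inner ℝ e γ = 0 → ∀ v ∈ Vtheta x θ, inner ℝ v γ = 0)
    {γ : V} (hγ : γ ∈ Φpos) (hγΨ : ¬ ∀ v ∈ Vtheta x θ, inner ℝ v γ = 0) :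
    0 < inner ℝ e γ :=
  (hdom γ hγ).lt_of_ne fun h ↦ hγΨ (hreg γ (Or.inl hγ) h.symm)

theorem pow_apply_mem_neg_iff_inner_neg (hx : x '' (Φpos ∪ -Φpos) = Φpos ∪ -Φpos)
    (hdom : ∀ α ∈ Φpos, 0 ≤ inner ℝ e α)
    (hreg : ∀ γ ∈ Φpos ∪ -Φpos, inner ℝ e γ = 0 → ∀ v ∈ Vtheta x θ, inner ℝ v γ = 0)
    {γ : V} (hγ : γ ∈ Φpos) (hγΨ : ¬ ∀ v ∈ Vtheta x θ, inner ℝ v γ = 0) (n : ℕ) :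
    (x ^ n) γ ∈ -Φpos ↔ inner ℝ e ((x ^ n) γ) < 0 := by
  constructor
  · intro hneg
    have hle : inner ℝ e ((x ^ n) γ) ≤ 0 := by
      simpa [inner_neg_right] using hdom _ (Set.mem_neg.mp hneg)
    refine hle.lt_of_ne fun h ↦ hγΨ fun v hv ↦ ?_
    rw [← (x ^ n).inner_map_map]
    exact hreg _ (Or.inr hneg) h _ (mapsTo_pow_Vtheta n hv)
  · intro hlt
    have hΦ : MapsTo (x ^ n) (Φpos ∪ -Φpos) (Φpos ∪ -Φpos) := by
      rw [LinearIsometryEquiv.coe_pow]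
      exact (hx ▸ mapsTo_image x _).iterate n
    exact (hΦ (Or.inl hγ)).resolve_left fun hpos ↦ (hdom _ hpos).not_gt hlt

theorem nx_eq_floor (hθ : 0 < θ ∧ θ ≤ π) (hx : x '' (Φpos ∪ -Φpos) = Φpos ∪ -Φpos)
    (hdom : ∀ α ∈ Φpos, 0 ≤ inner ℝ e α)
    (hreg : ∀ γ ∈ Φpos ∪ -Φpos, inner ℝ e γ = 0 → ∀ v ∈ Vtheta x θ, inner ℝ v γ = 0)
    {w : V → ℂ}
    (hw : ∀ (n : ℕ) (γ : V), inner ℝ e ((x ^ n) γ) = (w γ * Complex.exp (↑(n * θ) * Complex.I)).re)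
    {γ : V} (hγ : γ ∈ Φpos) (hγΨ : ¬ ∀ v ∈ Vtheta x θ, inner ℝ v γ = 0) :
    nx x (-Φpos) γ = ⌊(π / 2 - (w γ).arg) / θ⌋₊ + 1 := by
  have hre : 0 < (w γ).re := by
    have h0 : inner ℝ e γ = (w γ).re := by simpa using hw 0 γ
    exact h0 ▸ inner_pos_of_not_forall_inner_Vtheta_eq_zero hdom hreg hγ hγΨ
  have harg := abs_lt.mp (Complex.abs_arg_lt_pi_div_two_of_re_pos hre)
  have hneg := pow_apply_mem_neg_iff_inner_neg hx hdom hreg hγ hγΨ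
  set j := ⌊(π / 2 - (w γ).arg) / θ⌋₊ + 1
  obtain ⟨hj₁, hj₂⟩ := floor_div_add_one_mul_mem_Ioo (φ := π / 2 - (w γ).arg) (by linarith)
    (by linarith) hθ.1 hθ.2
  have hjmem : j ∈ {i : ℕ | 1 ≤ i ∧ (x ^ i) γ ∈ -Φpos} := by
    refine ⟨Nat.le_add_left 1 _, (hneg j).mpr ?_⟩
    rw [hw]
    exact Complex.re_mul_exp_neg_of_pi_div_two_lt_arg_add (by rintro h; simp [h] at hre)
      (by linarith) (by linarith)
  refine le_antisymm (Nat.sInf_le hjmem) (le_csInf ⟨j, hjmem⟩ fun i ⟨_, hi⟩ ↦ ?_)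
  have := Complex.pi_div_two_lt_arg_add_of_re_mul_exp_neg hre (mul_nonneg i.cast_nonneg hθ.1.le)
    (hw i γ ▸ (hneg i).mp hi)
  rw [Nat.add_one_le_iff, Nat.floor_lt (div_nonneg (by linarith) hθ.1.le), div_lt_iff₀ hθ.1]
  linarith

end RootSystem

theorem rotation_max_inequality_general {V : Type*} [NormedAddCommGroup V]
    [InnerProductSpace ℝ V]
    (Φpos : Set V) (x : V ≃ₗᵢ[ℝ] V) (θ : ℝ) (e : V)
    (hx : x '' (Φpos ∪ -Φpos) = Φpos ∪ -Φpos)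
    (hθ : 0 < θ ∧ θ ≤ Real.pi)
    (he : e ∈ Vtheta x θ) (hdom : ∀ α ∈ Φpos, 0 ≤ (inner ℝ e α : ℝ))
    (hreg : ∀ γ ∈ Φpos ∪ -Φpos, (inner ℝ e γ : ℝ) = 0 →
      ∀ v ∈ Vtheta x θ, (inner ℝ v γ : ℝ) = 0) :
    ∀ α ∈ Φpos, ∀ β ∈ Φpos,
      ¬ (∀ v ∈ Vtheta x θ, (inner ℝ v α : ℝ) = 0) →
      ¬ (∀ v ∈ Vtheta x θ, (inner ℝ v β : ℝ) = 0) →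
      α + β ∈ Φpos →
      nx x (-Φpos) (α + β) ≤ max (nx x (-Φpos) α) (nx x (-Φpos) β) := by
  intro α hα β hβ hαΨ hβΨ hαβ
  obtain ⟨w, hw⟩ := exists_inner_pow_apply_eq_re he
  have hre : ∀ γ ∈ Φpos, (¬ ∀ v ∈ Vtheta x θ, inner ℝ v γ = 0) → 0 < (w γ).re :=
    fun γ hγ hγΨ ↦ by
      have h0 : inner ℝ e γ = (w γ).re := by simpa using hw 0 γ
      exact h0 ▸ inner_pos_of_not_forall_inner_Vtheta_eq_zero hdom hreg hγ hγΨ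
  have hαβΨ : ¬ ∀ v ∈ Vtheta x θ, inner ℝ v (α + β) = 0 := fun h ↦ by
    have := h e he
    rw [inner_add_right] at this
    linarith [inner_pos_of_not_forall_inner_Vtheta_eq_zero hdom hreg hα hαΨ,
      inner_pos_of_not_forall_inner_Vtheta_eq_zero hdom hreg hβ hβΨ]
  rw [nx_eq_floor hθ hx hdom hreg hw hα hαΨ, nx_eq_floor hθ hx hdom hreg hw hβ hβΨ,
    nx_eq_floor hθ hx hdom hreg hw hαβ hαβΨ, map_add]
  rcases min_le_iff.mp (Complex.min_arg_le_arg_add (hre α hα hαΨ) (hre β hβ hβΨ)) with h | h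
  · exact le_max_of_le_left (by gcongr; exact hθ.1.le)
  · exact le_max_of_le_right (by gcongr; exact hθ.1.le)

/-- with `e ∈ closure C₀` a `Φ`-regular point of `V_x^θ`
(`0 < θ ≤ π`) and `Ψ = {γ ∈ Φ | V_x^θ ⊆ H_γ}`: for all `α, β ∈ Φ⁺ \ Ψ` with
`α + β ∈ Φ⁺` one has `n_x(α+β) ≤ max (n_x α) (n_x β)`. -/
theorem rotation_max_inequality {V : Type*} [NormedAddCommGroup V]
    [InnerProductSpace ℝ V] [FiniteDimensional ℝ V]
    (Φpos : Set V) (x : V ≃ₗᵢ[ℝ] V) (θ : ℝ) (e : V)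
    (hfin : (Φpos ∪ -Φpos).Finite)
    (hdisj : Disjoint Φpos (-Φpos))
    (hx : x '' (Φpos ∪ -Φpos) = Φpos ∪ -Φpos)
    (hord : ∃ m : ℕ, 1 ≤ m ∧ x ^ m = 1)
    (hθ : 0 < θ ∧ θ ≤ Real.pi)
    (he : e ∈ Vtheta x θ) (hdom : ∀ α ∈ Φpos, 0 ≤ (inner ℝ e α : ℝ))
    (hreg : ∀ γ ∈ Φpos ∪ -Φpos, (inner ℝ e γ : ℝ) = 0 →
      ∀ v ∈ Vtheta x θ, (inner ℝ v γ : ℝ) = 0) :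
    ∀ α ∈ Φpos, ∀ β ∈ Φpos,
      ¬ (∀ v ∈ Vtheta x θ, (inner ℝ v α : ℝ) = 0) →
      ¬ (∀ v ∈ Vtheta x θ, (inner ℝ v β : ℝ) = 0) →
      α + β ∈ Φpos →
      nx x (-Φpos) (α + β) ≤ max (nx x (-Φpos) α) (nx x (-Φpos) β) :=
  rotation_max_inequality_general Φpos x θ e hx hθ he hdom hreg
end
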